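/- arXiv:1707.04042 — 9 statements merged into one kernel-verified Lean document; each statement's English description precedes it below -/
import Mathlib

section
/- Let K be a field and k ≥ 2 an integer such that k·1 ≠ 0 in K. Let b, u, R ∈ K[X] be polynomials such that R is coprime to b, and let l ≥ 2 be an integer such that b^(l−1) divides R^k − u. Then there exists a polynomial R' ∈ K[X] such that b^(l−1) divides R' − R and b^l divides (R')^k − u. -/
open Polynomial

theorem hensel_step (K : Type*) [Field K] (k : ℕ) (hk : 2 ≤ k) (hkK : (k : K) ≠ 0)
    (b u R : K[X]) (hcop : IsCoprime R b) (l : ℕ) (hl : 2 ≤ l)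
    (hdvd : b ^ (l - 1) ∣ R ^ k - u) :
    ∃ R' : K[X], b ^ (l - 1) ∣ R' - R ∧ b ^ l ∣ R' ^ k - u := by
  obtain ⟨q, hq⟩ := hdvd
  have hunit : IsUnit ((k : K[X])) := by
    rw [← Polynomial.C_eq_natCast]
    exact Polynomial.isUnit_C.mpr (isUnit_iff_ne_zero.mpr hkK)
  have hcop2 : IsCoprime ((k : K[X]) * R ^ (k - 1)) b :=
    (isCoprime_mul_unit_left_left hunit _ _).mpr (hcop.pow_left)
  obtain ⟨c, d, hcd⟩ := hcop2
  set t : K[X] := -(c * q) with ht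
  set s : K[X] := b ^ (l - 1) * t with hs
  refine ⟨R + s, ⟨t, by ring⟩, ?_⟩
  have hA : b ^ l ∣ (R + s) ^ k - R ^ (k - 1) * s * k - R ^ k := by
    refine dvd_trans ?_ (dvd_trans (pow_dvd_pow_of_dvd ⟨t, rfl⟩ 2)
      (sq_dvd_add_pow_sub_sub s R k))
    rw [← pow_mul]
    exact pow_dvd_pow b (by omega)
  have hpl : b ^ l = b ^ (l - 1) * b := by
    rw [← pow_succ]; congr 1; omega
  have hB : b ^ l ∣ (R ^ k - u) + R ^ (k - 1) * s * k := by
    have h1 : (R ^ k - u) + R ^ (k - 1) * s * k = b ^ (l - 1) * (q * (d * b)) := by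
      have hdb : d * b = 1 - c * ((k : K[X]) * R ^ (k - 1)) := by
        linear_combination hcd
      rw [hq, hs, ht, hdb]; ring
    rw [h1, hpl]; exact ⟨q * d, by ring⟩
  have heq : (R + s) ^ k - u =
      ((R + s) ^ k - R ^ (k - 1) * s * k - R ^ k) + ((R ^ k - u) + R ^ (k - 1) * s * k) := by
    ring
  rw [heq]
  exact dvd_add hA hB
end

section
/- Let k and N be integers with k > 1 and N > 1, and let K be a field such that k·1 ≠ 0 in K. Let b, u ∈ K[X] be coprime polynomials such that u is a k-th power modulo b, i.e., there exists R ∈ K[X] with b dividing R^k − u. Then for every nonzero ε ∈ K there exist polynomials a, F ∈ K[X] such that a^k + (−1)^(k+1)·b^k·F = ε^k·u^N. -/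
open Polynomial

private lemma aux_binom {R : Type*} [CommRing R] (a x : R) (m : ℕ) :
    ∃ z : R, (a + x) ^ (m + 1) = a ^ (m + 1) + (m + 1 : ℕ) * a ^ m * x + x ^ 2 * z := by
  induction m with
  | zero => exact ⟨0, by push_cast; ring⟩
  | succ n ih =>
    obtain ⟨z, hz⟩ := ih
    refine ⟨(n + 1 : ℕ) * a ^ n + z * (a + x), ?_⟩
    rw [pow_succ (a + x), hz]
    push_cast
    ring

private lemma unit_coprime {R : Type*} [CommSemiring R] {b v : R} (h : IsUnit v) :
    IsCoprime b v := by
  obtain ⟨w, hw⟩ := h.exists_left_inv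
  exact ⟨0, w, by simp [hw]⟩

theorem norm_equation_solution (K : Type*) [Field K] (k N : ℕ) (hk : 1 < k) (hN : 1 < N)
    (hkK : (k : K) ≠ 0) (b u : K[X]) (hcop : IsCoprime b u)
    (hpow : ∃ R : K[X], b ∣ R ^ k - u) :
    ∀ ε : K, ε ≠ 0 → ∃ a F : K[X],
      a ^ k + (-1 : K[X]) ^ (k + 1) * b ^ k * F = C ε ^ k * u ^ N := by
  obtain ⟨k', rfl⟩ : ∃ k', k = k' + 1 := ⟨k - 1, by omega⟩
  intro ε hε
  set w : K[X] := C ε ^ (k' + 1) * u ^ N with hw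
  obtain ⟨R, p, hp⟩ := hpow
  -- b coprime to R
  have hbRk : IsCoprime b (R ^ (k' + 1)) := by
    have h1 : R ^ (k' + 1) = u + b * p := by linear_combination hp
    rw [h1]; exact hcop.add_mul_left_right p
  have hbR : IsCoprime b R := (IsCoprime.pow_right_iff (by omega)).mp hbRk
  have hεu : IsUnit (C ε) := isUnit_C.mpr (isUnit_iff_ne_zero.mpr hε)
  have hku : IsUnit ((k' + 1 : ℕ) : K[X]) := by
    have : IsUnit (C ((k' + 1 : ℕ) : K)) := isUnit_C.mpr (isUnit_iff_ne_zero.mpr hkK)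
    simpa using this
  -- Hensel lifting
  have key : ∀ m : ℕ, ∃ a : K[X], IsCoprime b a ∧ b ^ (m + 1) ∣ a ^ (k' + 1) - w := by
    intro m
    induction m with
    | zero =>
      refine ⟨C ε * R ^ N, (unit_coprime hεu).mul_right (hbR.pow_right), ?_⟩
      obtain ⟨q, hq⟩ := sub_dvd_pow_sub_pow (R ^ (k' + 1)) u N
      refine ⟨C ε ^ (k' + 1) * (p * q), ?_⟩
      rw [hw]
      linear_combination (C ε ^ (k' + 1)) * hq + (C ε ^ (k' + 1) * q) * hp
    | succ m ih =>
      obtain ⟨a, ha, t, ht⟩ := ih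
      have hc : IsCoprime b (((k' + 1 : ℕ) : K[X]) * a ^ k') :=
        (unit_coprime hku).mul_right (ha.pow_right)
      obtain ⟨x, y, hxy⟩ := hc
      set c : K[X] := -(y * t) with hcdef
      refine ⟨a + b ^ (m + 1) * c, ?_, ?_⟩
      · have := ha.add_mul_left_right (b ^ m * c)
        rwa [show b * (b ^ m * c) = b ^ (m + 1) * c by ring] at this
      · obtain ⟨z, hz⟩ := aux_binom a (b ^ (m + 1) * c) k'
        refine ⟨t * x + b ^ m * c ^ 2 * z, ?_⟩
        push_cast at hz hxy ⊢
        rw [hcdef] at hz ⊢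
        linear_combination hz + ht + (-(b ^ (m + 1)) * t) * hxy
  obtain ⟨a, -, s, hs⟩ := key k'
  refine ⟨a, (-1 : K[X]) ^ (k' + 1 + 1) * (-s), ?_⟩
  have hsq : ((-1 : K[X]) ^ (k' + 1 + 1)) * ((-1 : K[X]) ^ (k' + 1 + 1)) = 1 := by
    rw [← pow_add]; exact Even.neg_one_pow ⟨k' + 2, by ring⟩
  rw [hw] at hs
  linear_combination hs + (-(b ^ (k' + 1)) * s) * hsq
end

section
/- Let k and N be integers with k > 1 and N ≥ 1, and let K be a field such that k·1 ≠ 0 in K. Let b, u ∈ K[X] be coprime polynomials with deg b ≥ 1, and suppose there exists R ∈ K[X] with b dividing R^k − u. Then for every nonzero ε ∈ K there exists a polynomial a ∈ K[X] with deg a < k·deg b such that b^k divides a^k − ε^k·u^N. -/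
open Polynomial

private lemma bin_aux {R : Type*} [CommRing R] (a x : R) (j : ℕ) :
    x ^ 2 ∣ (a + x) ^ (j + 1) - (a ^ (j + 1) + (j + 1 : ℕ) * a ^ j * x) := by
  induction j with
  | zero => simp
  | succ n ih =>
    obtain ⟨c, hc⟩ := ih
    have h1 : (a + x) ^ (n + 1) = a ^ (n + 1) + (n + 1 : ℕ) * a ^ n * x + x ^ 2 * c := by
      linear_combination hc
    refine ⟨a * c + (n + 1 : ℕ) * a ^ n + x * c, ?_⟩
    have h2 : (a + x) ^ (n + 1 + 1) = (a + x) * (a + x) ^ (n + 1) := by ring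
    rw [h2, h1]
    push_cast
    ring

theorem hensel_lift_degree_bound (K : Type*) [Field K] (k N : ℕ) (hk : 1 < k) (hN : 1 ≤ N)
    (hkK : (k : K) ≠ 0) (b u : K[X]) (hcop : IsCoprime b u) (hb : 1 ≤ b.natDegree)
    (hpow : ∃ R : K[X], b ∣ R ^ k - u) :
    ∀ ε : K, ε ≠ 0 → ∃ a : K[X], a.degree < (k * b.natDegree : ℕ) ∧
      b ^ k ∣ a ^ k - C ε ^ k * u ^ N := by
  intro ε hε
  obtain ⟨R, hR⟩ := hpow
  set c : K[X] := C ε ^ k * u ^ N with hc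
  have hbne : b ≠ 0 := fun h => by simp [h] at hb
  have hkpos : 0 < k := lt_trans one_pos hk
  obtain ⟨j, rfl⟩ : ∃ j, k = j + 1 := ⟨k - 1, (Nat.succ_pred_eq_of_pos hkpos).symm⟩
  -- coprimality of b with c
  have hεu : IsUnit (C ε ^ (j + 1)) := (isUnit_C.2 hε.isUnit).pow _
  have hbc : IsCoprime b c := by
    rw [hc, isCoprime_mul_unit_left_right hεu]
    exact hcop.pow_right
  -- base case
  have hbase : b ∣ (C ε * R ^ N) ^ (j + 1) - c := by
    have h1 : (C ε * R ^ N) ^ (j + 1) - c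
        = C ε ^ (j + 1) * ((R ^ (j + 1)) ^ N - u ^ N) := by rw [hc]; ring
    rw [h1]
    exact (hR.trans (sub_dvd_pow_sub_pow _ _ N)).mul_left _
  -- the unit k in K[X]
  have hku : IsUnit (C ((j + 1 : ℕ) : K)) := isUnit_C.2 hkK.isUnit
  -- Hensel lifting
  have key : ∀ m : ℕ, 1 ≤ m → ∃ a : K[X], b ^ m ∣ a ^ (j + 1) - c := by
    intro m hm
    induction m, hm using Nat.le_induction with
    | base => exact ⟨C ε * R ^ N, by simpa using hbase⟩
    | succ m hm ih =>
      obtain ⟨a, e, he⟩ := ih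
      -- b is coprime to a
      have hba : IsCoprime b a := by
        have h1 : b ∣ a ^ (j + 1) - c := (dvd_pow_self b (Nat.one_le_iff_ne_zero.mp hm)).trans ⟨e, he⟩
        obtain ⟨d, hd⟩ := h1
        have h2 : IsCoprime b (a ^ (j + 1)) := by
          have : a ^ (j + 1) = c + b * d := by linear_combination hd
          rw [this]
          exact hbc.add_mul_left_right d
        exact (IsCoprime.pow_right_iff (Nat.succ_pos j)).mp h2
      -- solve the linear congruence
      have hcop2 : IsCoprime b (C ((j + 1 : ℕ) : K) * a ^ j) :=
        (isCoprime_mul_unit_left_right hku _ _).mpr (hba.pow_right)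
      obtain ⟨x, y, hxy⟩ := hcop2
      set t : K[X] := -(y * e) with ht
      refine ⟨a + t * b ^ m, ?_⟩
      obtain ⟨w, hw⟩ := bin_aux a (t * b ^ m) j
      have hcast : ((j + 1 : ℕ) : K[X]) = C ((j + 1 : ℕ) : K) := by
        simp [map_natCast]
      -- rewrite everything
      have hmain : (a + t * b ^ m) ^ (j + 1) - c
          = b ^ m * (e + C ((j + 1 : ℕ) : K) * a ^ j * t) + (t * b ^ m) ^ 2 * w := by
        have h1 : (a + t * b ^ m) ^ (j + 1)
            = a ^ (j + 1) + C ((j + 1 : ℕ) : K) * a ^ j * (t * b ^ m) + (t * b ^ m) ^ 2 * w := by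
          rw [← hcast]
          linear_combination hw
        rw [h1]
        linear_combination he
      rw [hmain]
      apply dvd_add
      · have h2 : e + C ((j + 1 : ℕ) : K) * a ^ j * t = e * (x * b) := by
          rw [ht]
          linear_combination -e * hxy
        rw [h2, pow_succ]
        exact mul_dvd_mul_left _ ⟨e * x, by ring⟩
      · have h3 : b ^ (m + 1) ∣ b ^ (2 * m) := pow_dvd_pow b (by omega)
        exact h3.trans ⟨t ^ 2 * w, by ring⟩
  obtain ⟨a, ha⟩ := key (j + 1) (by omega)
  -- reduce modulo the monic multiple of b ^ (j+1)
  set b' : K[X] := b * C b.leadingCoeff⁻¹ with hb'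
  have hmon : b'.Monic := monic_mul_leadingCoeff_inv hbne
  have hqmon : (b' ^ (j + 1)).Monic := hmon.pow _
  set a' : K[X] := a %ₘ (b' ^ (j + 1)) with ha'
  have hbb' : b ^ (j + 1) ∣ b' ^ (j + 1) := pow_dvd_pow_of_dvd ⟨C b.leadingCoeff⁻¹, rfl⟩ _
  have hdvd1 : b ^ (j + 1) ∣ a' - a := by
    refine hbb'.trans ⟨-(a /ₘ (b' ^ (j + 1))), ?_⟩
    rw [ha', modByMonic_eq_sub_mul_div a (b' ^ (j + 1))]
    ring
  refine ⟨a', ?_, ?_⟩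
  · have h1 : a'.degree < (b' ^ (j + 1)).degree := degree_modByMonic_lt a hqmon
    have h2 : (b' ^ (j + 1)).degree = (((j + 1) * b.natDegree : ℕ) : WithBot ℕ) := by
      have hdeq : b'.natDegree = b.natDegree :=
        natDegree_eq_of_degree_eq (degree_mul_leadingCoeff_inv b hbne)
      rw [degree_eq_natDegree hqmon.ne_zero, natDegree_pow, hdeq]
    rw [h2] at h1
    exact h1
  · have h3 : b ^ (j + 1) ∣ a' ^ (j + 1) - a ^ (j + 1) :=
      hdvd1.trans (sub_dvd_pow_sub_pow a' a (j + 1))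
    have h4 : a' ^ (j + 1) - c = (a' ^ (j + 1) - a ^ (j + 1)) + (a ^ (j + 1) - c) := by ring
    rw [h4]
    exact dvd_add h3 ha
end

section
/- Let K be a field, k ≥ 1 an integer, and F ∈ K[X] a polynomial. Let L be the quotient of the polynomial ring (RatFunc K)[Y] by the (monic, degree k) polynomial Y^k − F, i.e., L = AdjoinRoot (Y^k − F) as a RatFunc K-algebra, and let y denote the image of Y in L. Then for all polynomials a, b ∈ K[X], the algebra norm of the element a + b·y of L over RatFunc K equals the image in RatFunc K of the polynomial a^k + (−1)^(k+1)·b^k·F. -/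
open Polynomial

lemma det_aux {R : Type*} [CommRing R] (n : ℕ) (a b f : R) :
    Matrix.det (Matrix.of fun i j : Fin (n + 1) =>
      (if (i : ℕ) = (j : ℕ) then a else 0) +
      (if (j : ℕ) = n then (if (i : ℕ) = 0 then b * f else 0)
        else (if (i : ℕ) = (j : ℕ) + 1 then b else 0)))
    = a ^ (n + 1) + (-1) ^ n * b ^ (n + 1) * f := by
  induction n with
  | zero => simp [Matrix.det_fin_one]
  | succ m _ =>
    rw [Matrix.det_succ_row_zero]
    have hsub : ({0, Fin.last (m + 1)} : Finset (Fin (m + 2))) ⊆ Finset.univ :=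
      Finset.subset_univ _
    rw [← Finset.sum_subset hsub ?hz]
    case hz =>
      intro j _ hj
      simp only [Finset.mem_insert, Finset.mem_singleton, not_or] at hj
      obtain ⟨hj0, hjl⟩ := hj
      have h1 : (j : ℕ) ≠ 0 := fun h => hj0 (Fin.ext (by simpa using h))
      have h2 : (j : ℕ) ≠ m + 1 := fun h => hjl (Fin.ext (by simpa using h))
      simp only [Matrix.of_apply, Fin.val_zero]
      split_ifs <;> first | omega | ring1 | simp [*] | exact (False.elim ‹False›)
    rw [Finset.sum_pair (by simp [Fin.ext_iff] : (0 : Fin (m + 2)) ≠ Fin.last (m + 1))]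
    have hminor0 : (Matrix.det ((Matrix.of fun i j : Fin (m + 2) =>
        (if (i : ℕ) = (j : ℕ) then a else 0) +
        (if (j : ℕ) = m + 1 then (if (i : ℕ) = 0 then b * f else 0)
          else (if (i : ℕ) = (j : ℕ) + 1 then b else 0))).submatrix Fin.succ
          (Fin.succAbove 0))) = a ^ (m + 1) := by
      rw [Fin.succAbove_zero]
      rw [Matrix.det_of_lowerTriangular]
      · rw [show (a ^ (m + 1) : R) = ∏ i : Fin (m + 1), a by simp]
        refine Finset.prod_congr rfl fun i _ => ?_
        simp only [Matrix.submatrix_apply, Matrix.of_apply, Fin.val_succ]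
        split_ifs <;> first | omega | ring1 | exact (False.elim ‹False›)
      · intro i j hji
        have hij : (i : ℕ) < (j : ℕ) := hji
        simp only [Matrix.submatrix_apply, Matrix.of_apply, Fin.val_succ]
        split_ifs <;> first | omega | ring1 | exact (False.elim ‹False›)
    have hminorl : (Matrix.det ((Matrix.of fun i j : Fin (m + 2) =>
        (if (i : ℕ) = (j : ℕ) then a else 0) +
        (if (j : ℕ) = m + 1 then (if (i : ℕ) = 0 then b * f else 0)
          else (if (i : ℕ) = (j : ℕ) + 1 then b else 0))).submatrix Fin.succ
          (Fin.succAbove (Fin.last (m + 1))))) = b ^ (m + 1) := by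
      rw [Fin.succAbove_last]
      rw [Matrix.det_of_upperTriangular]
      · rw [show (b ^ (m + 1) : R) = ∏ i : Fin (m + 1), b by simp]
        refine Finset.prod_congr rfl fun i _ => ?_
        simp only [Matrix.submatrix_apply, Matrix.of_apply, Fin.val_succ,
          Fin.coe_castSucc]
        have h2 : (i : ℕ) < m + 1 := i.isLt
        split_ifs <;> first | omega | ring1 | exact (False.elim ‹False›)
      · intro i j hji
        have hij : (j : ℕ) < (i : ℕ) := hji
        have h2 : (j : ℕ) < m + 1 := j.isLt
        simp only [Matrix.submatrix_apply, Matrix.of_apply, Fin.val_succ,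
          Fin.coe_castSucc]
        split_ifs <;> first | omega | ring1 | exact (False.elim ‹False›)
    rw [hminor0, hminorl]
    simp only [Matrix.of_apply, Fin.val_zero, Fin.val_last]
    norm_num
    ring

theorem norm_superelliptic (K : Type*) [Field K] (k : ℕ) (hk : 1 ≤ k) (F : K[X]) :
    ∀ a b : K[X],
      Algebra.norm (RatFunc K)
        (algebraMap (RatFunc K) (AdjoinRoot ((X : (RatFunc K)[X]) ^ k -
            C (algebraMap K[X] (RatFunc K) F)))
          (algebraMap K[X] (RatFunc K) a) +
        algebraMap (RatFunc K) (AdjoinRoot ((X : (RatFunc K)[X]) ^ k -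
            C (algebraMap K[X] (RatFunc K) F)))
          (algebraMap K[X] (RatFunc K) b) *
        AdjoinRoot.root ((X : (RatFunc K)[X]) ^ k - C (algebraMap K[X] (RatFunc K) F))) =
      algebraMap K[X] (RatFunc K) (a ^ k + (-1 : K[X]) ^ (k + 1) * b ^ k * F) := by
  intro a b
  obtain ⟨n, rfl⟩ : ∃ n, k = n + 1 := ⟨k - 1, (Nat.succ_pred_eq_of_pos hk).symm⟩
  set f : RatFunc K := algebraMap K[X] (RatFunc K) F with hf
  set a' : RatFunc K := algebraMap K[X] (RatFunc K) a with ha'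
  set b' : RatFunc K := algebraMap K[X] (RatFunc K) b with hb'
  set P : (RatFunc K)[X] := X ^ (n + 1) - C f with hP
  have hmonic : P.Monic := monic_X_pow_sub_C f (Nat.succ_ne_zero n)
  have hdegP : P.degree = ((n + 1 : ℕ) : WithBot ℕ) := degree_X_pow_sub_C (Nat.succ_pos n) f
  have hnd : P.natDegree = n + 1 := natDegree_X_pow_sub_C
  -- rewrite RHS
  conv_rhs => rw [map_add, map_mul, map_mul, map_pow, map_pow, map_pow, map_neg, map_one, ← ha', ← hb', ← hf]
  -- rewrite the element as mk of a polynomial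
  have hx : (algebraMap (RatFunc K) (AdjoinRoot P)) a' +
      (algebraMap (RatFunc K) (AdjoinRoot P)) b' * AdjoinRoot.root P =
      AdjoinRoot.mk P (C a' + C b' * X) := by
    rw [map_add, map_mul, AdjoinRoot.mk_X, AdjoinRoot.algebraMap_eq]
    rfl
  rw [hx]
  set pb := AdjoinRoot.powerBasis' hmonic with hpb
  rw [Algebra.norm_eq_matrix_det pb.basis]
  have hnd' : pb.dim = n + 1 := hnd
  rw [← Matrix.det_submatrix_equiv_self (finCongr hnd'.symm)]
  -- mod computation
  have hmod : ∀ j : ℕ, j < n + 1 → ((C a' + C b' * X) * X ^ j) %ₘ P =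
      C a' * X ^ j + (if j + 1 = n + 1 then C (b' * f) else C b' * X ^ (j + 1)) := by
    intro j hj
    refine (div_modByMonic_unique (if j + 1 = n + 1 then C b' else 0) _ hmonic ⟨?_, ?_⟩).2
    · split_ifs with h
      · have hjn : j = n := by omega
        subst hjn
        rw [hP, C_mul]; ring
      · rw [hP]; ring
    · rw [hdegP]
      apply lt_of_le_of_lt (degree_add_le _ _)
      apply max_lt
      · exact lt_of_le_of_lt (degree_C_mul_X_pow_le _ _) (by exact_mod_cast hj)
      · split_ifs with h
        · exact lt_of_le_of_lt degree_C_le (by exact_mod_cast Nat.succ_pos n)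
        · exact lt_of_le_of_lt (degree_C_mul_X_pow_le _ _) (by exact_mod_cast (by omega : j + 1 < n + 1))
  -- identify the matrix
  have hMat : ((Algebra.leftMulMatrix pb.basis (AdjoinRoot.mk P (C a' + C b' * X))).submatrix
        (finCongr hnd'.symm) (finCongr hnd'.symm)) =
      Matrix.of (fun i j : Fin (n + 1) =>
        (if (i : ℕ) = (j : ℕ) then a' else 0) +
        (if (j : ℕ) = n then (if (i : ℕ) = 0 then b' * f else 0)
          else (if (i : ℕ) = (j : ℕ) + 1 then b' else 0))) := by
    ext i j
    rw [Matrix.submatrix_apply, Algebra.leftMulMatrix_eq_repr_mul]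
    have hbj : pb.basis (finCongr hnd'.symm j) = AdjoinRoot.mk P (X ^ (j : ℕ)) := by
      rw [pb.basis_eq_pow]
      show AdjoinRoot.root P ^ (j : ℕ) = AdjoinRoot.mk P (X ^ (j : ℕ))
      rw [← AdjoinRoot.mk_X, ← map_pow]
    rw [hbj, ← map_mul]
    have hrepr : ∀ z : (RatFunc K)[X], ∀ i : Fin pb.dim,
        pb.basis.repr (AdjoinRoot.mk P z) i = (z %ₘ P).coeff (i : ℕ) := by
      intro z i
      have h := AdjoinRoot.powerBasisAux'_repr_apply_to_fun hmonic (AdjoinRoot.mk P z) i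
      rwa [AdjoinRoot.modByMonicHom_mk] at h
    rw [hrepr, hmod (j : ℕ) j.isLt]
    have hival : ((finCongr hnd'.symm i : Fin pb.dim) : ℕ) = (i : ℕ) := rfl
    rw [hival]
    rw [coeff_add, coeff_C_mul, coeff_X_pow, Matrix.of_apply]
    rcases eq_or_ne ((j : ℕ) + 1) (n + 1) with h | h
    · rw [if_pos h, if_pos (by omega : (j : ℕ) = n), coeff_C]
      rw [mul_ite, mul_one, mul_zero]
    · rw [if_neg h, if_neg (by omega : (j : ℕ) ≠ n), coeff_C_mul, coeff_X_pow]
      rw [mul_ite, mul_one, mul_zero, mul_ite, mul_one, mul_zero]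
  rw [hMat, det_aux]
  have hpow : (-1 : RatFunc K) ^ (n + 1 + 1) = (-1) ^ n := by
    rw [pow_succ, pow_succ]; ring
  rw [hpow]
end

section
/- Let K be a field and k ≥ 2 an integer such that k·1 ≠ 0 in K. Let F ∈ K[X] be a separable polynomial with deg F ≥ 5. Then the polynomial Y^k − F is irreducible in (RatFunc K)[Y], where F is viewed in RatFunc K via the canonical map. -/
open Polynomial

theorem superelliptic_irreducible (K : Type*) [Field K] (k : ℕ) (hk : 2 ≤ k)
    (hkK : (k : K) ≠ 0) (F : K[X]) (hF : F.Separable) (hdeg : 5 ≤ F.natDegree) :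
    Irreducible ((X : (RatFunc K)[X]) ^ k - C (algebraMap K[X] (RatFunc K) F)) := by
  have hk0 : k ≠ 0 := by omega
  have hFsf : Squarefree F := hF.squarefree
  have hF0 : F ≠ 0 := fun h => by simp [h] at hdeg
  have hFnu : ¬ IsUnit F := by
    intro h
    have := Polynomial.natDegree_eq_zero_of_isUnit h
    omega
  obtain ⟨π, hπ, hπF⟩ := WfDvdMonoid.exists_irreducible_factor hFnu hF0
  have hπprime : Prime π := hπ.prime
  -- The polynomial over K[X]
  set f : K[X][X] := X ^ k - C F with hf
  have hmonic : f.Monic := monic_X_pow_sub_C F hk0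
  have hirr : Irreducible f := by
    apply irreducible_of_eisenstein_criterion
      (Ideal.span_singleton_prime hπprime.ne_zero |>.mpr hπprime)
    · rw [hmonic.leadingCoeff]
      intro h
      exact hπprime.not_isUnit (isUnit_of_dvd_one (Ideal.mem_span_singleton.mp h))
    · intro n hn
      rw [hf, coeff_sub, coeff_X_pow, coeff_C]
      have hdegf : f.degree = k := by
        rw [hf]; exact degree_X_pow_sub_C (by omega) F
      rw [hdegf] at hn
      have hnk : n ≠ k := fun h => by simp [h] at hn
      rcases eq_or_ne n 0 with rfl | hn0
      · simp only [hnk, if_false, if_pos rfl, zero_sub]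
        exact Ideal.mem_span_singleton.mpr (Dvd.dvd.neg_right hπF)
      · simp [hnk, hn0]
    · rw [hf]; rw [degree_X_pow_sub_C (by omega) F]; exact_mod_cast by positivity
    · rw [hf]
      simp only [coeff_sub, coeff_X_pow, coeff_C, if_pos rfl]
      have hk0' : ¬ (0 = k) := by omega
      rw [if_neg (by omega), zero_sub]
      rw [Ideal.span_singleton_pow, Ideal.mem_span_singleton]
      intro h
      have : π * π ∣ F := by
        have := (dvd_neg).mp h
        rwa [pow_two] at this
      exact hπ.not_isUnit (hFsf π this)
    · exact hmonic.isPrimitive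
  have := (hmonic.irreducible_iff_irreducible_map_fraction_map (K := RatFunc K)).mp hirr
  rwa [hf, Polynomial.map_sub, Polynomial.map_pow, map_X, map_C] at this
end

section
/- Let K be a perfect field and k ≥ 2 an integer such that k·1 ≠ 0 in K. Let F ∈ K[X] be a separable polynomial with deg F ≥ 5. Let O_C be the equation order K[X][Y]/(Y^k − F), i.e., AdjoinRoot of the polynomial Y^k − C(F) over K[X]. Then O_C is an integral domain and is integrally closed (in its field of fractions). -/
open Polynomial
open scoped IntermediateField

set_option maxHeartbeats 3000000 in
theorem equation_order_integrally_closed (K : Type*) [Field K] [PerfectField K]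
    (k : ℕ) (hk : 2 ≤ k) (hkK : (k : K) ≠ 0)
    (F : K[X]) (hF : F.Separable) (hdeg : 5 ≤ F.natDegree) :
    IsDomain (AdjoinRoot ((X : (K[X])[X]) ^ k - C F)) ∧
      IsIntegrallyClosed (AdjoinRoot ((X : (K[X])[X]) ^ k - C F)) := by
  have hk0 : k ≠ 0 := by omega
  set f : (K[X])[X] := X ^ k - C F with hfdef
  have hmonic : f.Monic := monic_X_pow_sub_C F hk0
  have hdegf : f.natDegree = k := natDegree_X_pow_sub_C
  have hF0 : F ≠ 0 := by
    intro h; rw [h, natDegree_zero] at hdeg; omega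
  have hsq : Squarefree F := hF.squarefree
  have hcoeff0 : f.coeff 0 = -F := by
    simp only [hfdef, coeff_sub, coeff_X_pow, coeff_C_zero]
    simp only [if_neg (by omega : ¬(0 : ℕ) = k)]
    ring
  have hcoeffmid : ∀ i, i ≠ 0 → i < k → f.coeff i = 0 := by
    intro i hi0 hik
    simp only [hfdef, coeff_sub, coeff_X_pow, coeff_C, if_neg hik.ne, if_neg hi0]
    ring
  -- Eisenstein at every prime factor of F
  have heis : ∀ p : K[X], Prime p → p ∣ F → f.IsEisensteinAt (Ideal.span {p}) := by
    intro p hp hpF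
    refine ⟨?_, ?_, ?_⟩
    · rw [hmonic.leadingCoeff, Ideal.mem_span_singleton]
      exact fun h => hp.not_unit (isUnit_of_dvd_one h)
    · intro i hi
      rw [hdegf] at hi
      rcases eq_or_ne i 0 with rfl | hi0
      · rw [hcoeff0, Ideal.mem_span_singleton]
        exact (dvd_neg).mpr hpF
      · rw [hcoeffmid i hi0 hi]
        exact Ideal.zero_mem _
    · rw [hcoeff0, Ideal.span_singleton_pow, Ideal.mem_span_singleton, dvd_neg]
      exact fun h => hp.not_unit (hsq p (by rwa [pow_two] at h))
  obtain ⟨p₀, hp₀irr, hp₀F⟩ :=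
    WfDvdMonoid.exists_irreducible_factor
      (fun h => by
        have := natDegree_eq_zero_of_isUnit h
        omega) hF0
  have hp₀ : Prime p₀ := hp₀irr.prime
  have hirr : Irreducible f :=
    (heis p₀ hp₀ hp₀F).irreducible
      ((Ideal.span_singleton_prime hp₀.ne_zero).mpr hp₀)
      hmonic.isPrimitive (by rw [hdegf]; omega)
  have hprime : Prime f := hirr.prime
  haveI hdom : IsDomain (AdjoinRoot f) := by
    have : (Ideal.span {f} : Ideal (K[X])[X]).IsPrime :=
      (Ideal.span_singleton_prime hmonic.ne_zero).mpr hprime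
    exact Ideal.Quotient.isDomain_iff_prime _ |>.mpr this
  refine ⟨hdom, ?_⟩
  -- Set up the fraction field picture
  let K' := FractionRing K[X]
  set f' : K'[X] := f.map (algebraMap K[X] K') with hf'def
  have hf'monic : f'.Monic := hmonic.map _
  have hf'ne : f' ≠ 0 := hf'monic.ne_zero
  have hirr' : Irreducible f' :=
    (hmonic.irreducible_iff_irreducible_map_fraction_map).mp hirr
  haveI : Fact (Irreducible f') := ⟨hirr'⟩
  set L := AdjoinRoot f' with hLdef
  have halgRL : algebraMap K[X] L = (algebraMap K' L).comp (algebraMap K[X] K') := rfl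
  -- the map from AdjoinRoot f to L
  have hev : Polynomial.eval₂ (algebraMap K[X] L) (AdjoinRoot.root f') f = 0 := by
    rw [halgRL, ← eval₂_map]
    exact AdjoinRoot.eval₂_root f'
  letI : Algebra (AdjoinRoot f) L :=
    (AdjoinRoot.lift (algebraMap K[X] L) (AdjoinRoot.root f') hev).toAlgebra
  have halgBL : algebraMap (AdjoinRoot f) L =
      AdjoinRoot.lift (algebraMap K[X] L) (AdjoinRoot.root f') hev := rfl
  haveI : IsScalarTower K[X] (AdjoinRoot f) L :=
    IsScalarTower.of_algebraMap_eq fun r => by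
      rw [halgBL, AdjoinRoot.algebraMap_eq, AdjoinRoot.lift_of]
  have hRK'inj : Function.Injective (algebraMap K[X] K') := IsFractionRing.injective K[X] K'
  have hRLinj : Function.Injective (algebraMap K[X] L) := by
    rw [halgRL]
    exact (algebraMap K' L).injective.comp hRK'inj
  have hminK' : minpoly K' (AdjoinRoot.root f') = f' := by
    rw [AdjoinRoot.minpoly_root hf'ne, hf'monic.leadingCoeff, inv_one, map_one, mul_one]
  -- injectivity of the map AdjoinRoot f → L
  have hinj : Function.Injective (algebraMap (AdjoinRoot f) L) := by
    rw [injective_iff_map_eq_zero]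
    intro x hx
    obtain ⟨Q, rfl⟩ := AdjoinRoot.mk_surjective x
    rw [halgBL, AdjoinRoot.lift_mk] at hx
    have haev : aeval (AdjoinRoot.root f') (Q.map (algebraMap K[X] K')) = 0 := by
      rw [aeval_def, eval₂_map, ← halgRL]
      exact hx
    have hdvd : f' ∣ Q.map (algebraMap K[X] K') := by
      have := minpoly.dvd K' (AdjoinRoot.root f') haev
      rwa [hminK'] at this
    rw [AdjoinRoot.mk_eq_zero]
    exact (Polynomial.map_dvd_map _ hRK'inj hmonic).mp hdvd
  -- L is the fraction field of AdjoinRoot f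
  haveI hfr : IsFractionRing (AdjoinRoot f) L := by
    refine ⟨fun ⟨y, hy⟩ => ?_, fun z => ?_, fun {x y} h => ⟨1, by simpa using hinj h⟩⟩
    · apply IsUnit.mk0
      intro h
      exact (mem_nonZeroDivisors_iff_ne_zero.mp hy)
        ((injective_iff_map_eq_zero _).mp hinj _ h)
    · obtain ⟨P, rfl⟩ := AdjoinRoot.mk_surjective z
      obtain ⟨b, hbM, hb⟩ := IsLocalization.integerNormalization_spec
        (nonZeroDivisors K[X]) P
      have hbne : (b : K[X]) ≠ 0 := mem_nonZeroDivisors_iff_ne_zero.mp hbM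
      have hofb : AdjoinRoot.of f (b : K[X]) ≠ 0 := by
        intro h
        apply hbne
        apply hRLinj
        rw [map_zero]
        have heq2 : algebraMap K[X] L (b : K[X])
            = algebraMap (AdjoinRoot f) L (AdjoinRoot.of f (b : K[X])) := by
          rw [← AdjoinRoot.algebraMap_eq, ← IsScalarTower.algebraMap_apply]
        rw [heq2, h, map_zero]
      refine ⟨⟨AdjoinRoot.mk f (IsLocalization.integerNormalization (nonZeroDivisors K[X]) P),
        ⟨AdjoinRoot.of f (b : K[X]), mem_nonZeroDivisors_iff_ne_zero.mpr hofb⟩⟩, ?_⟩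
      simp only
      have h1 : algebraMap (AdjoinRoot f) L
          (AdjoinRoot.mk f (IsLocalization.integerNormalization (nonZeroDivisors K[X]) P)) =
          aeval (AdjoinRoot.root f')
            ((IsLocalization.integerNormalization (nonZeroDivisors K[X]) P).map
              (algebraMap K[X] K')) := by
        rw [halgBL, AdjoinRoot.lift_mk, aeval_def, eval₂_map, ← halgRL]
      have h2 : ((IsLocalization.integerNormalization (nonZeroDivisors K[X]) P).map
          (algebraMap K[X] K')) = C (algebraMap K[X] K' (b : K[X])) * P := by
        rw [hb]
        ext i
        rw [coeff_smul, coeff_C_mul, Algebra.smul_def]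
      have h3 : algebraMap (AdjoinRoot f) L (AdjoinRoot.of f (b : K[X])) =
          algebraMap K' L (algebraMap K[X] K' (b : K[X])) := by
        rw [← AdjoinRoot.algebraMap_eq, ← IsScalarTower.algebraMap_apply, halgRL]
        rfl
      rw [h1, h2, map_mul, aeval_C, h3, AdjoinRoot.aeval_eq]
      exact mul_comm _ _
  -- power basis of L over K'
  let pb : PowerBasis K' L := AdjoinRoot.powerBasis hf'ne
  have hgen : pb.gen = AdjoinRoot.root f' := AdjoinRoot.powerBasis_gen hf'ne
  have hdim : pb.dim = k := by
    rw [AdjoinRoot.powerBasis_dim, hf'def, hmonic.natDegree_map, hdegf]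
  haveI : Module.Finite K' L := pb.finite
  have hint : IsIntegral K[X] (AdjoinRoot.root f') := ⟨f, hmonic, hev⟩
  have hminR : minpoly K[X] (AdjoinRoot.root f') = f := by
    have h2 := minpoly.isIntegrallyClosed_eq_field_fractions K' L hint
    change minpoly K' (AdjoinRoot.root f') = _ at h2
    rw [hminK', hf'def] at h2
    exact (Polynomial.map_injective _ hRK'inj h2.symm)
  -- separability
  have hkK' : ((k : K')) ≠ 0 := by
    have : ((k : K[X])) ≠ 0 := by
      simpa using fun h => hkK (by exact_mod_cast Polynomial.C_injective (by simpa using h))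
    simpa using fun h => this (hRK'inj (by simpa using h))
  have hc0 : algebraMap K[X] K' F ≠ 0 := fun h => hF0 (hRK'inj (by simpa using h))
  have hf'eq : f' = X ^ k - C (algebraMap K[X] K' F) := by
    rw [hf'def, hfdef, Polynomial.map_sub, Polynomial.map_pow, map_X, map_C]
  have hsep' : f'.Separable := by
    rw [hf'eq]; exact separable_X_pow_sub_C _ hkK' hc0
  haveI : Algebra.IsSeparable K' L := by
    haveI : Algebra.IsSeparable K' K'⟮AdjoinRoot.root f'⟯ :=
      (IntermediateField.isSeparable_adjoin_simple_iff_isSeparable K' L).mpr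
        (by rw [IsSeparable, hminK']; exact hsep')
    exact Algebra.IsSeparable.of_algHom K' _
      (((IntermediateField.equivOfEq (IntermediateField.adjoin_root_eq_top f')).trans
        IntermediateField.topEquiv).symm.toAlgHom)
  -- norm and discriminant
  have hfinrank : Module.finrank K' L = k := by rw [pb.finrank]; exact hdim
  have hdim2 : (AdjoinRoot.powerBasis hf'ne : PowerBasis K' L).dim = k := hdim
  have hgen2 : (AdjoinRoot.powerBasis hf'ne : PowerBasis K' L).gen = AdjoinRoot.root f' := hgen
  have hnormgen : Algebra.norm K' pb.gen = (-1) ^ k * (-(algebraMap K[X] K' F)) := by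
    rw [Algebra.PowerBasis.norm_gen_eq_coeff_zero_minpoly]
    simp only [hgen, hgen2, hdim, hdim2, hminK', hf'eq]
    rw [coeff_sub, coeff_X_pow, coeff_C_zero, if_neg (by omega : ¬(0 : ℕ) = k), zero_sub]
  have hdiscr : ∃ ε : K', (ε = 1 ∨ ε = -1) ∧
      Algebra.discr K' pb.basis = ε * ((k : K') ^ k * (algebraMap K[X] K' F) ^ (k - 1)) := by
    refine ⟨(-1) ^ (k * (k - 1) / 2) * ((-1) ^ k * (-1)) ^ (k - 1), ?_, ?_⟩
    · have hpm : ∀ x y : K', (x = 1 ∨ x = -1) → (y = 1 ∨ y = -1) →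
          (x * y = 1 ∨ x * y = -1) := by
        rintro x y (rfl | rfl) (rfl | rfl) <;> norm_num
      have hpmpow : ∀ x : K', (x = 1 ∨ x = -1) → ∀ n, (x ^ n = 1 ∨ x ^ n = -1) := by
        rintro x (rfl | rfl) n
        · left; simp
        · exact neg_one_pow_eq_or _ n
      exact hpm _ _ (neg_one_pow_eq_or _ _)
        (hpmpow _ (hpm _ _ (neg_one_pow_eq_or _ _) (Or.inr rfl)) _)
    · rw [Algebra.discr_powerBasis_eq_norm, hfinrank]
      have hd : derivative (minpoly K' pb.gen) = C ((k : K')) * X ^ (k - 1) := by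
        rw [hgen, hminK', hf'eq]
        simp [derivative_X_pow]
        exact (map_natCast C k).symm
      rw [hd]
      rw [map_mul, aeval_C, aeval_X_pow, map_mul, Algebra.norm_algebraMap, map_pow, hnormgen,
        hfinrank]
      ring
  obtain ⟨ε, hε, hd⟩ := hdiscr
  -- conclude integrally closed
  rw [isIntegrallyClosed_iff L]
  intro z hz
  haveI : Module.Finite K[X] (AdjoinRoot f) := (AdjoinRoot.powerBasis' hmonic).finite
  haveI : Algebra.IsIntegral K[X] (AdjoinRoot f) := Algebra.IsIntegral.of_finite K[X] _
  have hzR : IsIntegral K[X] z := isIntegral_trans z hz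
  have hmem := Algebra.discr_mul_isIntegral_mem_adjoin (R := K[X]) (K := K') (L := L) (B := pb)
    (by rw [hgen]; exact hint) hzR
  -- transform the scalar
  have hmem2 : (((k : K[X]) ^ k * F ^ (k - 1)) • z) ∈ Algebra.adjoin K[X] {pb.gen} := by
    have heq : (((k : K[X]) ^ k * F ^ (k - 1)) • z)
        = ε • (Algebra.discr K' pb.basis • z) := by
      have hmap : algebraMap K[X] K' ((k : K[X]) ^ k * F ^ (k - 1))
          = (k : K') ^ k * (algebraMap K[X] K' F) ^ (k - 1) := by
        rw [map_mul, map_pow, map_pow, map_natCast]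
      rw [smul_smul, ← algebraMap_smul K' ((k : K[X]) ^ k * F ^ (k - 1)) z, hmap, hd]
      congr 1
      rcases hε with rfl | rfl <;> ring
    rw [heq]
    rcases hε with rfl | rfl
    · rwa [one_smul]
    · rw [neg_one_smul]
      exact neg_mem hmem
  -- remove the unit (k^k)
  have hkunit : IsUnit ((k : K[X]) ^ k) := by
    apply IsUnit.pow
    have : ((k : K[X])) = C ((k : K)) := (map_natCast C k).symm
    rw [this, Polynomial.isUnit_C]
    exact hkK.isUnit
  have hmem3 : (F ^ (k - 1) • z) ∈ Algebra.adjoin K[X] {pb.gen} := by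
    obtain ⟨v, hv⟩ := hkunit
    have : F ^ (k - 1) • z = (v⁻¹ : K[X]ˣ) • (((k : K[X]) ^ k * F ^ (k - 1)) • z) := by
      rw [← hv, Units.smul_def, smul_smul, Units.inv_mul_cancel_left]
    rw [this, Units.smul_def]
    exact Subalgebra.smul_mem _ hmem2 _
  -- peel primes dividing F
  have hpeel : ∀ s : Multiset K[X], (∀ q ∈ s, Prime q ∧ q ∣ F) → ∀ w : L, IsIntegral K[X] w →
      s.prod • w ∈ Algebra.adjoin K[X] {pb.gen} → w ∈ Algebra.adjoin K[X] {pb.gen} := by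
    intro s
    induction s using Multiset.induction with
    | empty => intro _ w _ h; simpa using h
    | cons q t ih =>
      intro hqs w hwint h
      rw [Multiset.prod_cons, mul_smul] at h
      have hq := hqs q (Multiset.mem_cons_self q t)
      have hwint2 : IsIntegral K[X] (t.prod • w) := by
        rw [Algebra.smul_def]
        exact (isIntegral_algebraMap).mul hwint
      have hei : (minpoly K[X] pb.gen).IsEisensteinAt (Submodule.span K[X] {q}) := by
        rw [hgen, hminR]
        exact heis q hq.1 hq.2
      have h1 := mem_adjoin_of_smul_prime_smul_of_minpoly_isEisensteinAt (B := pb)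
        hq.1 (by rw [hgen]; exact hint) hwint2 h hei
      exact ih (fun q hq => hqs q (Multiset.mem_cons_of_mem hq)) w hwint h1
  -- factor F into primes
  have hzmem : z ∈ Algebra.adjoin K[X] {pb.gen} := by
    obtain ⟨u, hu⟩ := UniqueFactorizationMonoid.factors_prod hF0
    have hprodeq : (UniqueFactorizationMonoid.factors F).prod = F * ((u⁻¹ : K[X]ˣ) : K[X]) :=
      (Units.eq_mul_inv_iff_mul_eq u).mpr hu
    refine hpeel ((k - 1) • UniqueFactorizationMonoid.factors F) ?_ z hzR ?_
    · intro q hq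
      rw [Multiset.mem_nsmul] at hq
      exact ⟨UniqueFactorizationMonoid.prime_of_factor q hq.2,
        UniqueFactorizationMonoid.dvd_of_mem_factors hq.2⟩
    · rw [Multiset.prod_nsmul, hprodeq, mul_pow, mul_comm, mul_smul]
      exact Subalgebra.smul_mem _ hmem3 _
  -- z is in the image of AdjoinRoot f
  have hrange : Algebra.adjoin K[X] {pb.gen} ≤ (IsScalarTower.toAlgHom K[X] (AdjoinRoot f) L).range := by
    rw [Algebra.adjoin_le_iff]
    rintro x hx
    rw [Set.mem_singleton_iff] at hx
    subst hx
    exact ⟨AdjoinRoot.root f, by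
      show algebraMap (AdjoinRoot f) L (AdjoinRoot.root f) = pb.gen
      rw [hgen, halgBL]
      exact AdjoinRoot.lift_root hev⟩
  obtain ⟨y, hy⟩ := hrange hzmem
  exact ⟨y, hy⟩
end

section
/- Let K be a field and k ≥ 2 an integer such that k·1 ≠ 0 in K. Let F ∈ K[X] be a separable polynomial. Then the K-algebra K[X][Y]/(Y^k − F) (i.e., AdjoinRoot of the polynomial Y^k − C(F) over K[X], viewed as a K-algebra) is formally smooth over K. -/
set_option maxHeartbeats 2000000


open Polynomial

theorem superelliptic_formally_smooth (K : Type*) [Field K] (k : ℕ) (hk : 2 ≤ k)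
    (hkK : (k : K) ≠ 0) (F : K[X]) (hF : F.Separable) :
    Algebra.FormallySmooth K (AdjoinRoot ((X : (K[X])[X]) ^ k - C F)) := by
  classical
  obtain ⟨a, b, hab⟩ := hF
  set P : Type _ := (K[X])[X] with hP
  set f₀ : P := (X : (K[X])[X]) ^ k - C F with hf₀
  set S : Type _ := AdjoinRoot f₀ with hS
  letI : Algebra P S := (AdjoinRoot.mk f₀).toAlgebra
  haveI : IsScalarTower K P S := IsScalarTower.of_algebraMap_eq' rfl
  haveI : Algebra.FormallySmooth K P := Algebra.FormallySmooth.comp K (K[X]) P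
  have hsurj : Function.Surjective (algebraMap P S) := AdjoinRoot.mk_surjective
  have hker : RingHom.ker (algebraMap P S) = Ideal.span {f₀} := Ideal.mk_ker
  set I' : Ideal P := RingHom.ker (algebraMap P S) with hI'
  have hfmem : f₀ ∈ I' := by rw [hker]; exact Ideal.subset_span rfl
  -- the derivation δ : P → S with δ f₀ = 1
  set e₁ : K[X] := (k : K)⁻¹ • a with he₁
  set cy : S := AdjoinRoot.mk f₀ (C e₁) * AdjoinRoot.root f₀ with hcy
  set cx : S := AdjoinRoot.mk f₀ (C (-b)) with hcx
  set fy : P →ₗ[P] S := cy • Algebra.linearMap P S with hfy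
  set fx : PolynomialModule (K[X]) (K[X]) →ₗ[P] S :=
    cx • ((Algebra.linearMap P S).comp
      (PolynomialModule.equivPolynomialSelf : PolynomialModule (K[X]) (K[X]) ≃ₗ[P] P).toLinearMap)
    with hfx
  set dy : Derivation K P P :=
    (Polynomial.derivative' (R := K[X])).restrictScalars K with hdy
  set dx : Derivation K P (PolynomialModule (K[X]) (K[X])) :=
    (Polynomial.derivative' (R := K)).mapCoeffs with hdx
  set δ : Derivation K P S := fy.compDer dy + fx.compDer dx with hδ
  have hroot : AdjoinRoot.root f₀ ^ k = AdjoinRoot.mk f₀ (C F) := by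
    have h : AdjoinRoot.mk f₀ f₀ = 0 := AdjoinRoot.mk_self
    rw [hf₀, map_sub, sub_eq_zero, map_pow, AdjoinRoot.mk_X] at h
    exact h
  have hδf : δ f₀ = 1 := by
    have hdyf : dy f₀ = C ((k : K[X])) * X ^ (k - 1) := by
      show derivative f₀ = _
      rw [hf₀, derivative_sub, derivative_C, sub_zero, derivative_X_pow]
    have hdxf : dx f₀ = -(PolynomialModule.single (K[X]) 0 (derivative F)) := by
      show Polynomial.derivative'.mapCoeffs f₀ = _
      rw [hf₀, map_sub, Derivation.mapCoeffs_C, Derivation.leibniz_pow,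
        Derivation.mapCoeffs_X, smul_zero, smul_zero, zero_sub]
      rfl
    have h1 : δ f₀ = fy (dy f₀) + fx (dx f₀) := rfl
    rw [h1, hdyf, hdxf, map_neg]
    have h2 : fy (C ((k : K[X])) * X ^ (k - 1)) =
        AdjoinRoot.mk f₀ (C a) * AdjoinRoot.root f₀ ^ k := by
      show cy • (AdjoinRoot.mk f₀ (C ((k : K[X])) * X ^ (k - 1))) = _
      rw [smul_eq_mul, hcy]
      have hca : e₁ * (k : K[X]) = a := by
        rw [he₁, ← Polynomial.C_eq_natCast, smul_mul_assoc, mul_comm a,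
          ← Polynomial.smul_eq_C_mul, smul_smul, inv_mul_cancel₀ hkK, one_smul]
      have : AdjoinRoot.mk f₀ (C e₁) * AdjoinRoot.mk f₀ (C ((k : K[X]))) =
          AdjoinRoot.mk f₀ (C a) := by
        rw [← map_mul, ← map_mul, hca]
      calc AdjoinRoot.mk f₀ (C e₁) * AdjoinRoot.root f₀ *
          AdjoinRoot.mk f₀ (C ((k : K[X])) * X ^ (k - 1))
          = (AdjoinRoot.mk f₀ (C e₁) * AdjoinRoot.mk f₀ (C ((k : K[X])))) *
            (AdjoinRoot.root f₀ * AdjoinRoot.mk f₀ (X ^ (k - 1))) := by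
            rw [map_mul]; ring
        _ = AdjoinRoot.mk f₀ (C a) * AdjoinRoot.root f₀ ^ k := by
            rw [this, map_pow, AdjoinRoot.mk_X, ← pow_succ']
            congr 2
            omega
    have h3 : fx (PolynomialModule.single (K[X]) 0 (derivative F)) =
        cx * AdjoinRoot.mk f₀ (C (derivative F)) := by
      show cx • (AdjoinRoot.mk f₀
        ((PolynomialModule.equivPolynomialSelf (R := K[X]))
          (PolynomialModule.single (K[X]) 0 (derivative F)))) = _
      rw [smul_eq_mul, PolynomialModule.equivPolynomialSelf_apply_eq,
        PolynomialModule.equivPolynomial_single, Polynomial.monomial_zero_left]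
    rw [h2, h3, hroot, hcx, ← map_mul, ← map_mul, ← map_mul, ← map_neg, ← map_add,
      ← map_one (AdjoinRoot.mk f₀)]
    congr 1
    rw [← C_mul, ← C_neg, ← C_add, ← C_1]
    congr 1
    linear_combination hab
  -- build the retraction
  rw [Algebra.FormallySmooth.iff_split_injection (R := K) (P := P) hsurj]
  haveI : IsScalarTower P (P ⧸ I') I'.Cotangent := inferInstance
  set e : I'.Cotangent := Ideal.toCotangent I' ⟨f₀, hfmem⟩ with he
  set e'' : (P ⧸ I') ≃ₐ[P] S :=
    Ideal.quotientKerAlgEquivOfSurjective (f := Algebra.ofId P S) hsurj with he''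
  set ν : S →ₗ[P] (P ⧸ I') := e''.symm.toLinearMap with hν
  set lam : (Ω[P⁄K]) →ₗ[P] S := δ.liftKaehlerDifferential with hlam
  set msc : (P ⧸ I') →ₗ[P] I'.Cotangent :=
    (LinearMap.toSpanSingleton (P ⧸ I') I'.Cotangent e).restrictScalars P with hmsc
  refine ⟨msc.comp ((LinearMap.mul' P (P ⧸ I')).comp (TensorProduct.map ν (ν.comp lam))), ?_⟩
  ext x
  obtain ⟨⟨x, hx⟩, rfl⟩ := Ideal.toCotangent_surjective _ x
  have hx2 : x ∈ Ideal.span {f₀} := by rw [← hker]; exact hx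
  obtain ⟨p, hp⟩ := Ideal.mem_span_singleton.mp hx2
  have hδx : δ x = AdjoinRoot.mk f₀ p := by
    rw [hp, Derivation.leibniz]
    have h0 : f₀ • δ p = 0 := by
      rw [Algebra.smul_def]
      have : algebraMap P S f₀ = 0 := AdjoinRoot.mk_self
      rw [this, zero_mul]
    rw [h0, zero_add, hδf, Algebra.smul_def, mul_one]
    rfl
  have hν1 : ν (1 : S) = 1 := map_one e''.symm
  have hνp : ν (AdjoinRoot.mk f₀ p) = Ideal.Quotient.mk I' p := by
    have h1 : e'' ((Ideal.Quotient.mk I') p) = AdjoinRoot.mk f₀ p := by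
      show Ideal.kerLiftAlg (Algebra.ofId P S) ((Ideal.Quotient.mk _) p) = _
      rw [Ideal.kerLiftAlg_mk]
      rfl
    apply e''.injective
    show e'' (e''.symm _) = _
    rw [AlgEquiv.apply_symm_apply, h1]
  rw [LinearMap.comp_apply, KaehlerDifferential.kerCotangentToTensor_toCotangent]
  simp only [LinearMap.comp_apply, TensorProduct.map_tmul, LinearMap.mul'_apply]
  rw [show lam (KaehlerDifferential.D K P x) = δ x from
    Derivation.liftKaehlerDifferential_comp_D δ x, hδx, hν1, hνp, one_mul ((Ideal.Quotient.mk I') p)]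
  show (Ideal.Quotient.mk I' p) • e = _
  rw [← Ideal.Quotient.algebraMap_eq, algebraMap_smul, he, ← map_smul]
  show _ = LinearMap.id (Ideal.toCotangent _ ⟨x, hx⟩)
  rw [LinearMap.id_apply]
  congr 1
  exact Subtype.ext (by show p • f₀ = x; rw [smul_eq_mul, hp, mul_comm])
end

section
/- Let k ≥ 2 be an integer and let a ∈ ℤ[X] be a polynomial whose constant coefficient a₀ satisfies gcd(a₀, k) = 1. Let p be an odd prime with p > k·deg a. Then the polynomial a^k − X^p, viewed in ℚ[X] via the canonical map ℤ[X] → ℚ[X], is separable. -/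
open Polynomial

/-- If the derivative of `f` is a nonzero constant times a power of `X` and the constant
coefficient of `f` is nonzero, then `f` is separable. -/
lemma aux_sep_of_deriv {K : Type*} [Field K] {f : K[X]} {u : K} {m : ℕ} (hu : u ≠ 0)
    (hd : derivative f = C u * X ^ m) (h0 : f.coeff 0 ≠ 0) : f.Separable := by
  rw [Polynomial.separable_def, hd]
  have hX : IsCoprime f X :=
    (((Polynomial.irreducible_X (R := K)).coprime_iff_not_dvd).mpr
      (by rw [Polynomial.X_dvd_iff]; exact h0)).symm
  have hCu : IsCoprime f (C u) :=
    isCoprime_one_right.of_isCoprime_of_dvd_right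
      ((isUnit_C.mpr hu.isUnit).dvd)
  exact hCu.mul_right (hX.pow_right)

/-- Squarefreeness transfers from a reduction mod `q` to `ℚ` for monic integer polynomials. -/
lemma aux_squarefree_of_mod {F : ℤ[X]} (hmono : F.Monic) {q : ℕ} (hq : q.Prime)
    (hsq : Squarefree (F.map (Int.castRingHom (ZMod q)))) :
    Squarefree (F.map (Int.castRingHom ℚ)) := by
  haveI : Fact q.Prime := ⟨hq⟩
  have halg : Int.castRingHom ℚ = algebraMap ℤ ℚ := (algebraMap_int_eq ℚ).symm
  intro g hg
  by_contra hgu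
  have hF0 : F.map (Int.castRingHom ℚ) ≠ 0 := (hmono.map _).ne_zero
  have hg0 : g ≠ 0 := by
    rintro rfl
    rw [zero_mul, zero_dvd_iff] at hg
    exact hF0 hg
  have hgF : g ∣ F.map (algebraMap ℤ ℚ) := by
    rw [← halg]; exact (dvd_mul_right g g).trans hg
  obtain ⟨g', hg'⟩ := IsIntegrallyClosed.eq_map_mul_C_of_dvd ℚ hmono hgF
  have hc : g.leadingCoeff ≠ 0 := leadingCoeff_ne_zero.mpr hg0
  have hmapg' : g'.map (algebraMap ℤ ℚ) = g * C g.leadingCoeff⁻¹ := by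
    have h2 := congrArg (· * C g.leadingCoeff⁻¹) hg'
    simpa [mul_assoc, ← C_mul, mul_inv_cancel₀ hc] using h2
  have hg'monic : g'.Monic := by
    apply Polynomial.monic_of_injective (f := algebraMap ℤ ℚ)
      (by exact_mod_cast Int.cast_injective)
    rw [hmapg']
    exact monic_mul_leadingCoeff_inv hg0
  have hdvdQ : (g' * g').map (algebraMap ℤ ℚ) ∣ F.map (algebraMap ℤ ℚ) := by
    have hgg : g * g = (g' * g').map (algebraMap ℤ ℚ) * C (g.leadingCoeff * g.leadingCoeff) := by
      rw [Polynomial.map_mul, C_mul]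
      conv_lhs => rw [← hg']
      ring
    rw [halg, hgg] at hg
    exact (dvd_mul_right _ _).trans hg
  have hdvdZ : g' * g' ∣ F :=
    (hmono.dvd_of_fraction_map_dvd_fraction_map (hg'monic.mul hg'monic)) hdvdQ
  have hdvdq : (g'.map (Int.castRingHom (ZMod q))) * (g'.map (Int.castRingHom (ZMod q)))
      ∣ F.map (Int.castRingHom (ZMod q)) := by
    have := Polynomial.map_dvd (Int.castRingHom (ZMod q)) hdvdZ
    rwa [Polynomial.map_mul] at this
  have hunit' : IsUnit (g'.map (Int.castRingHom (ZMod q))) := hsq _ hdvdq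
  have hdeg0 : g'.natDegree = 0 := by
    have h1 := natDegree_eq_zero_of_isUnit hunit'
    rwa [hg'monic.natDegree_map] at h1
  have hg'1 : g' = 1 := hg'monic.natDegree_eq_zero.mp hdeg0
  apply hgu
  rw [← hg', hg'1, Polynomial.map_one, one_mul]
  exact isUnit_C.mpr hc.isUnit

theorem example_trivial_case_separable (k : ℕ) (hk : 2 ≤ k) (a : ℤ[X])
    (ha : Int.gcd (a.coeff 0) (k : ℤ) = 1)
    (p : ℕ) (hp : p.Prime) (hodd : Odd p) (hbig : k * a.natDegree < p) :
    ((a ^ k - X ^ p).map (Int.castRingHom ℚ)).Separable := by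
  classical
  have hppos : 0 < p := hp.pos
  have ha0 : a.coeff 0 ≠ 0 := by
    intro h
    rw [h] at ha
    simp [Int.gcd] at ha
    omega
  have hcoeff0 : ((a ^ k - X ^ p).coeff 0) = (a.coeff 0) ^ k := by
    rw [coeff_sub, coeff_zero_eq_eval_zero, coeff_zero_eq_eval_zero, eval_pow, eval_pow,
      eval_X, zero_pow hppos.ne', sub_zero, ← coeff_zero_eq_eval_zero]
  rcases Nat.eq_zero_or_pos a.natDegree with hdeg0 | hdegpos
  · -- constant case: derivative over ℚ is already -p * X^(p-1)
    have hac : a = C (a.coeff 0) := Polynomial.eq_C_of_natDegree_eq_zero hdeg0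
    apply aux_sep_of_deriv (u := -(p : ℚ)) (m := p - 1)
    · simp only [ne_eq, neg_eq_zero, Nat.cast_eq_zero]
      exact hppos.ne'
    · rw [derivative_map]
      conv_lhs => rw [hac]
      rw [derivative_sub, ← C_pow, derivative_C, derivative_X_pow, zero_sub,
        Polynomial.map_neg, Polynomial.map_mul, Polynomial.map_C, Polynomial.map_pow,
        Polynomial.map_X, ← neg_mul, ← C_neg]
      simp only [eq_intCast]
      push_cast
      ring
    · rw [coeff_map, hcoeff0]
      rw [map_pow]
      apply pow_ne_zero
      simp only [eq_intCast, ne_eq, Int.cast_eq_zero]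
      exact ha0
  · -- nonconstant case
    set q := k.minFac with hqdef
    have hq : q.Prime := Nat.minFac_prime (by omega)
    have hqk : q ∣ k := Nat.minFac_dvd k
    have hqltp : q < p :=
      lt_of_le_of_lt (Nat.le_of_dvd (by omega) hqk)
        (lt_of_le_of_lt (Nat.le_mul_of_pos_right k hdegpos) hbig)
    have hqa0 : ¬ (q : ℤ) ∣ a.coeff 0 := by
      intro h
      have h1 : q ∣ (a.coeff 0).natAbs := by
        simpa using Int.natAbs_dvd_natAbs.mpr h
      have h2 : q ∣ Int.gcd (a.coeff 0) (k : ℤ) :=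
        Nat.dvd_gcd h1 (by simpa using hqk)
      rw [ha] at h2
      exact hq.one_lt.ne' (Nat.eq_one_of_dvd_one h2)
    set G : ℤ[X] := X ^ p - a ^ k with hGdef
    have hdegak : (a ^ k).degree < (p : WithBot ℕ) := by
      apply lt_of_le_of_lt (degree_le_natDegree)
      exact_mod_cast lt_of_le_of_lt (natDegree_pow_le) hbig
    have hGmonic : G.Monic := monic_X_pow_sub (by
      exact_mod_cast hdegak)
    -- separability mod q
    have hsepq : (G.map (Int.castRingHom (ZMod q))).Separable := by
      haveI : Fact q.Prime := ⟨hq⟩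
      apply aux_sep_of_deriv (u := ((p : ℤ) : ZMod q)) (m := p - 1)
      · rw [ne_eq, ZMod.intCast_zmod_eq_zero_iff_dvd]
        intro h
        have hqp : q ∣ p := by exact_mod_cast h
        exact absurd ((Nat.prime_dvd_prime_iff_eq hq hp).mp hqp) (by omega)
      · rw [derivative_map, hGdef, derivative_sub, derivative_X_pow, derivative_pow,
          Polynomial.map_sub, Polynomial.map_mul, Polynomial.map_mul, Polynomial.map_mul,
          Polynomial.map_C, Polynomial.map_pow, Polynomial.map_X, Polynomial.map_C,
          Polynomial.map_pow]
        have hk0 : (Int.castRingHom (ZMod q)) (k : ℤ) = 0 := by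
          rw [eq_intCast, ZMod.intCast_zmod_eq_zero_iff_dvd]
          exact_mod_cast hqk
        rw [hk0, C_0, zero_mul, zero_mul, sub_zero]
        simp [eq_intCast]
      · have hc0 : G.coeff 0 = -(a.coeff 0) ^ k := by
          rw [hGdef, coeff_sub, coeff_zero_eq_eval_zero, coeff_zero_eq_eval_zero, eval_pow,
            eval_pow, eval_X, zero_pow hppos.ne', zero_sub, ← coeff_zero_eq_eval_zero]
        rw [coeff_map, hc0]
        simp only [map_neg, map_pow, ne_eq, neg_eq_zero,
          pow_eq_zero_iff (by omega : k ≠ 0), eq_intCast,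
          ZMod.intCast_zmod_eq_zero_iff_dvd]
        exact hqa0
    have hsqq : Squarefree (G.map (Int.castRingHom (ZMod q))) := hsepq.squarefree
    have hsqQ : Squarefree (G.map (Int.castRingHom ℚ)) := aux_squarefree_of_mod hGmonic hq hsqq
    have hsepQ : (G.map (Int.castRingHom ℚ)).Separable :=
      PerfectField.separable_iff_squarefree.mpr hsqQ
    have heq : a ^ k - X ^ p = -G := by rw [hGdef]; ring
    rw [heq, Polynomial.map_neg, Polynomial.separable_def, derivative_neg]
    rw [Polynomial.separable_def] at hsepQ
    exact hsepQ.neg_left.neg_right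
end

section
/- Work in the polynomial ring (RatFunc ℚ)[X], writing t for the rational function variable. Let b := X^4 − 3X^3 + (1 + 2t)X^2 − 2tX + t^2 and let R := −(1/t)X^3 + (3/t)X^2 − ((1+t)/t)X + 1. Then b divides R^2 − X in (RatFunc ℚ)[X]. -/
open Polynomial

theorem leprevost_square_mod_b :
    letI t : RatFunc ℚ := RatFunc.X
    (X ^ 4 - 3 * X ^ 3 + C (1 + 2 * t) * X ^ 2 - C (2 * t) * X + C (t ^ 2)
        : (RatFunc ℚ)[X]) ∣
      ((- C (1 / t) * X ^ 3 + C (3 / t) * X ^ 2 - C ((1 + t) / t) * X + 1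
          : (RatFunc ℚ)[X]) ^ 2 - X) := by
  set t : RatFunc ℚ := RatFunc.X with htdef
  have ht : (t : RatFunc ℚ) ≠ 0 := RatFunc.X_ne_zero
  refine ⟨C (1 / t) ^ 2 * (X ^ 2 - 3 * X + 1), ?_⟩
  have he : (C t : (RatFunc ℚ)[X]) * C t⁻¹ = 1 := by
    rw [← map_mul, mul_inv_cancel₀ ht, map_one]
  simp only [div_eq_mul_inv, one_mul, map_mul, map_add, map_one, map_pow, map_ofNat]
  linear_combination (2 * C t * C t⁻¹ * X - C t * C t⁻¹ + 2 * C t⁻¹ * X - 6 * C t⁻¹ * X ^ 2 + 2 * C t⁻¹ * X ^ 3 - 1 + C t * C t⁻¹ * X + X : (RatFunc ℚ)[X]) * he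
end
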